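/- Let A, B be m×n matrices over the max-plus semiring and G a strictly row-monomial matrix with G ≤ B entrywise and the finite entries of G taken from B. Set H = G⁻(A ⊕ B) and suppose tr Hⁿ ≤ 0 (equivalently Tr(H) ≤ 0). Then B H* ≥ A H* entrywise; consequently every vector x = H*u with regular u satisfies A x ≤ B x. -/

import Mathlib

noncomputable section

/-- The max-plus carrier: ℝ ∪ {-∞}, with ⊥ playing the role of -∞. -/
abbrev MP := WithBot ℝ

/-- Max-plus matrix product: (A⊗B)_ik = max_j (a_ij + b_jk). -/
def mpMul {m n p : ℕ} (A : Matrix (Fin m) (Fin n) MP) (B : Matrix (Fin n) (Fin p) MP) :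
    Matrix (Fin m) (Fin p) MP :=
  fun i k => Finset.univ.sup fun j => A i j + B j k

/-- Max-plus matrix-vector product: (Ax)_i = max_j (a_ij + x_j). -/
def mpMulVec {m n : ℕ} (A : Matrix (Fin m) (Fin n) MP) (x : Fin n → MP) : Fin m → MP :=
  fun i => Finset.univ.sup fun j => A i j + x j

/-- Conjugate (multiplicative inverse transpose): (A⁻)_ij = -a_ji if a_ji ≠ -∞, else -∞. -/
def mpConj {m n : ℕ} (A : Matrix (Fin m) (Fin n) MP) : Matrix (Fin n) (Fin m) MP :=
  fun i j => (A j i).map fun r => -r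

/-- Tropical identity matrix: 0 on the diagonal, -∞ elsewhere. -/
def mpId (n : ℕ) : Matrix (Fin n) (Fin n) MP :=
  fun i j => if i = j then (0 : MP) else ⊥

/-- Tropical matrix powers, A⁰ = I. -/
def mpPow {n : ℕ} (A : Matrix (Fin n) (Fin n) MP) : ℕ → Matrix (Fin n) (Fin n) MP
  | 0 => mpId n
  | k + 1 => mpMul A (mpPow A k)

/-- Tropical trace: tr A = max_i a_ii. -/
def mpTr {n : ℕ} (A : Matrix (Fin n) (Fin n) MP) : MP :=
  Finset.univ.sup fun i => A i i

/-- Tr(A) = tr A ⊕ tr A² ⊕ ⋯ ⊕ tr Aⁿ. -/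
def mpTrFun {n : ℕ} (A : Matrix (Fin n) (Fin n) MP) : MP :=
  (Finset.Icc 1 n).sup fun k => mpTr (mpPow A k)

/-- Bounded Kleene star: A* = I ⊕ A ⊕ ⋯ ⊕ A^{n-1}. -/
def mpStar {n : ℕ} (A : Matrix (Fin n) (Fin n) MP) : Matrix (Fin n) (Fin n) MP :=
  fun i j => (Finset.range n).sup fun k => mpPow A k i j

/-- Entrywise max of matrices: A ⊕ B. -/
def mpAdd {m n : ℕ} (A B : Matrix (Fin m) (Fin n) MP) : Matrix (Fin m) (Fin n) MP :=
  fun i j => A i j ⊔ B i j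

/-- Strictly row-monomial: exactly one entry ≠ -∞ in each row. -/
def RowMonomial {m n : ℕ} (A : Matrix (Fin m) (Fin n) MP) : Prop :=
  ∀ i, ∃! j, A i j ≠ ⊥

/-- Row-regular: at least one entry ≠ -∞ in each row. -/
def RowRegular {m n : ℕ} (A : Matrix (Fin m) (Fin n) MP) : Prop :=
  ∀ i, ∃ j, A i j ≠ ⊥

/-- Regular vector: all entries finite. -/
def Regular {n : ℕ} (x : Fin n → MP) : Prop := ∀ j, x j ≠ ⊥

/-!
Since `G` is row-monomial with finite entries taken from `B`, the product `B G⁻` has a nonnegative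
diagonal, so `A ≤ A ⊕ B ≤ B G⁻ (A ⊕ B) = B H`, and multiplying by `H*` gives
`A H* ≤ B (H H*)`. For the same reason every row `j` of `H` that has a finite entry has
`h_jj ≥ 0`, so the diagonals of the powers `Hᵏ` increase with `k ≥ 1` and `tr Hⁿ ≤ 0` already
gives `tr Hᵏ ≤ 0` for all `1 ≤ k ≤ n`. Every cycle of `H` then has nonpositive weight, so deleting
cycles from walks shows `Hᵏ ≤ H*` for every `k`, whence `H H* ≤ H*` and `A H* ≤ B H*`.
-/

open Finset

lemma mp_add_sup {ι : Type*} (s : Finset ι) (f : ι → MP) (a : MP) :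
    a + s.sup f = s.sup fun x => a + f x :=
  apply_sup_eq_sup_comp (a + ·) (fun x y => (max_add_add_left a x y).symm) (WithBot.add_bot a)

lemma mp_sup_add {ι : Type*} (s : Finset ι) (f : ι → MP) (a : MP) :
    s.sup f + a = s.sup fun x => f x + a := by
  simpa only [add_comm a] using mp_add_sup s f a

section MatrixAlgebra

variable {m n p q : ℕ}

lemma mpMul_assoc (A : Matrix (Fin m) (Fin n) MP) (B : Matrix (Fin n) (Fin p) MP)
    (C : Matrix (Fin p) (Fin q) MP) :
    mpMul (mpMul A B) C = mpMul A (mpMul B C) := by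
  funext i l
  simp only [mpMul, mp_sup_add, mp_add_sup, add_assoc]
  exact Finset.sup_comm _ _ _

lemma mpMulVec_mpMul (A : Matrix (Fin m) (Fin n) MP) (S : Matrix (Fin n) (Fin p) MP)
    (u : Fin p → MP) :
    mpMulVec (mpMul A S) u = mpMulVec A (mpMulVec S u) := by
  funext i
  simp only [mpMulVec, mpMul, mp_sup_add, mp_add_sup, add_assoc]
  exact Finset.sup_comm _ _ _

lemma mpMul_mono_left {A A' : Matrix (Fin m) (Fin n) MP} (h : ∀ i j, A i j ≤ A' i j)
    (X : Matrix (Fin n) (Fin p) MP) (i : Fin m) (l : Fin p) :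
    mpMul A X i l ≤ mpMul A' X i l :=
  sup_mono_fun fun j _ => add_le_add_left (h i j) _

lemma mpMul_mono_right (A : Matrix (Fin m) (Fin n) MP) {X X' : Matrix (Fin n) (Fin p) MP}
    (h : ∀ j l, X j l ≤ X' j l) (i : Fin m) (l : Fin p) :
    mpMul A X i l ≤ mpMul A X' i l :=
  sup_mono_fun fun j _ => add_le_add_right (h j l) _

lemma mpMulVec_mono_left {A A' : Matrix (Fin m) (Fin n) MP} (h : ∀ i j, A i j ≤ A' i j)
    (u : Fin n → MP) (i : Fin m) :
    mpMulVec A u i ≤ mpMulVec A' u i :=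
  sup_mono_fun fun j _ => add_le_add_left (h i j) _

lemma le_mpMul_of_diag_nonneg {P : Matrix (Fin m) (Fin m) MP} (hP : ∀ i, 0 ≤ P i i)
    (X : Matrix (Fin m) (Fin n) MP) (i : Fin m) (l : Fin n) :
    X i l ≤ mpMul P X i l :=
  calc X i l ≤ P i i + X i l := le_add_of_nonneg_left (hP i)
    _ ≤ mpMul P X i l := le_sup (f := fun v => P i v + X v l) (mem_univ i)

end MatrixAlgebra

lemma RowMonomial.rowRegular {m n : ℕ} {G : Matrix (Fin m) (Fin n) MP} (hG : RowMonomial G) :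
    RowRegular G :=
  fun i => (hG i).exists

section Conjugate

variable {m n : ℕ} {G : Matrix (Fin m) (Fin n) MP}

lemma mpConj_add_cancel {i : Fin m} {j : Fin n} (h : G i j ≠ ⊥) : mpConj G j i + G i j = 0 := by
  obtain ⟨r, hr⟩ := WithBot.ne_bot_iff_exists.1 h
  simp only [mpConj, ← hr, WithBot.map_coe, ← WithBot.coe_add, neg_add_cancel, WithBot.coe_zero]

lemma mpMul_mpConj_diag_nonneg (hG : RowRegular G) {B : Matrix (Fin m) (Fin n) MP}
    (hGB : ∀ i j, G i j ≠ ⊥ → G i j ≤ B i j) (i : Fin m) :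
    0 ≤ mpMul B (mpConj G) i i := by
  obtain ⟨j, hj⟩ := hG i
  calc (0 : MP) = G i j + mpConj G j i := by rw [add_comm, mpConj_add_cancel hj]
    _ ≤ B i j + mpConj G j i := add_le_add_left (hGB i j hj) _
    _ ≤ mpMul B (mpConj G) i i := le_sup (f := fun j => B i j + mpConj G j i) (mem_univ j)

lemma mpConj_mul_diag_nonneg {C : Matrix (Fin m) (Fin n) MP}
    (hGC : ∀ i j, G i j ≠ ⊥ → G i j ≤ C i j) {j j' : Fin n}
    (h : mpMul (mpConj G) C j j' ≠ ⊥) :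
    0 ≤ mpMul (mpConj G) C j j := by
  obtain ⟨i, -, hi⟩ : ∃ i ∈ univ, mpConj G j i + C i j' ≠ ⊥ := by
    by_contra! hbot
    exact h ((Finset.sup_eq_bot_iff _ _).2 hbot)
  have hGij : G i j ≠ ⊥ := by
    intro hbot
    simp [mpConj, hbot] at hi
  calc (0 : MP) = mpConj G j i + G i j := (mpConj_add_cancel hGij).symm
    _ ≤ mpConj G j i + C i j := add_le_add_right (hGC i j hGij) _
    _ ≤ mpMul (mpConj G) C j j := le_sup (f := fun i => mpConj G j i + C i j) (mem_univ i)

end Conjugate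

section Walks

variable {n : ℕ} (H : Matrix (Fin n) (Fin n) MP)

def walkWeight (p : ℕ → Fin n) (a b : ℕ) : MP :=
  ∑ t ∈ Ico a b, H (p t) (p (t + 1))

lemma walkWeight_add (p : ℕ → Fin n) {a b c : ℕ} (hab : a ≤ b) (hbc : b ≤ c) :
    walkWeight H p a b + walkWeight H p b c = walkWeight H p a c :=
  sum_Ico_consecutive _ hab hbc

lemma add_mpPow_le_mpPow_succ (k : ℕ) (i v j : Fin n) :
    H i v + mpPow H k v j ≤ mpPow H (k + 1) i j :=
  le_sup (f := fun v => H i v + mpPow H k v j) (mem_univ v)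

lemma walkWeight_le_mpPow (p : ℕ → Fin n) {a b : ℕ} (hab : a ≤ b) :
    walkWeight H p a b ≤ mpPow H (b - a) (p a) (p b) := by
  obtain ⟨d, rfl⟩ := Nat.exists_eq_add_of_le hab
  rw [Nat.add_sub_cancel_left]
  clear hab
  induction d generalizing a with
  | zero => simp [walkWeight, mpPow, mpId]
  | succ d ih =>
    calc walkWeight H p a (a + (d + 1))
        = H (p a) (p (a + 1)) + walkWeight H p (a + 1) (a + 1 + d) := by
          rw [walkWeight, sum_eq_sum_Ico_succ_bot (by omega), walkWeight, Nat.add_right_comm]; rfl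
      _ ≤ H (p a) (p (a + 1)) + mpPow H d (p (a + 1)) (p (a + 1 + d)) :=
          add_le_add_right (ih (a := a + 1)) _
      _ ≤ mpPow H (d + 1) (p a) (p (a + (d + 1))) := by
          rw [Nat.add_right_comm]; exact add_mpPow_le_mpPow_succ H d _ _ _

lemma exists_walk_of_mpPow_ne_bot {k : ℕ} {i j : Fin n} (h : mpPow H k i j ≠ ⊥) :
    ∃ p : ℕ → Fin n, p 0 = i ∧ p k = j ∧ mpPow H k i j = walkWeight H p 0 k := by
  induction k generalizing i with
  | zero =>
    obtain rfl : i = j := by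
      by_contra hij
      exact h (by simp [mpPow, mpId, hij])
    exact ⟨fun _ => i, rfl, rfl, by simp [mpPow, mpId, walkWeight]⟩
  | succ k ih =>
    obtain ⟨v, -, hv⟩ := exists_mem_eq_sup univ ⟨i, mem_univ i⟩ fun v => H i v + mpPow H k v j
    have hv : mpPow H (k + 1) i j = H i v + mpPow H k v j := hv
    obtain ⟨q, hq0, hqk, hqw⟩ := ih fun hb => h (by rw [hv, hb, WithBot.add_bot])
    refine ⟨fun t => if t = 0 then i else q (t - 1), by simp, by simp [hqk], ?_⟩
    rw [hv, hqw, walkWeight, walkWeight, ← range_eq_Ico, ← range_eq_Ico, sum_range_succ']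
    simp [hq0, add_comm]

lemma mpPow_add_le (a c : ℕ) (i v j : Fin n) :
    mpPow H a i v + mpPow H c v j ≤ mpPow H (a + c) i j := by
  induction a generalizing i with
  | zero =>
    by_cases hiv : i = v
    · subst hiv; simp [mpPow, mpId]
    · simp [mpPow, mpId, hiv]
  | succ a ih =>
    rw [mpPow, mpMul, mp_sup_add, Nat.add_right_comm]
    refine Finset.sup_le fun w _ => ?_
    calc H i w + mpPow H a w v + mpPow H c v j
        ≤ H i w + mpPow H (a + c) w j := by rw [add_assoc]; exact add_le_add_right (ih w) _
      _ ≤ mpPow H (a + c + 1) i j := add_mpPow_le_mpPow_succ H _ _ _ _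

end Walks

section Star

variable {n : ℕ} {H : Matrix (Fin n) (Fin n) MP}

lemma mpPow_diag_le_mpTrFun {k : ℕ} (hk : 1 ≤ k) (hkn : k ≤ n) (v : Fin n) :
    mpPow H k v v ≤ mpTrFun H :=
  (le_sup (f := fun v => mpPow H k v v) (mem_univ v)).trans
    (le_sup (f := fun k => mpTr (mpPow H k)) (mem_Icc.2 ⟨hk, hkn⟩))

lemma walkWeight_nonpos_of_cycle (hTr : mpTrFun H ≤ 0) (p : ℕ → Fin n) {a b : ℕ}
    (hab : a < b) (hbn : b ≤ a + n) (hp : p a = p b) :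
    walkWeight H p a b ≤ 0 := by
  have hw := walkWeight_le_mpPow H p hab.le
  rw [← hp] at hw
  exact hw.trans ((mpPow_diag_le_mpTrFun (by omega) (by omega) _).trans hTr)

/-- Among the first `n + 1` vertices of a walk of length `k ≥ n` some vertex repeats; cutting out
the closed subwalk in between leaves a shorter walk that is at least as heavy. -/
lemma exists_lt_mpPow_le (hTr : mpTrFun H ≤ 0) {k : ℕ} (hk : n ≤ k) (i j : Fin n) :
    ∃ k' < k, mpPow H k i j ≤ mpPow H k' i j := by
  by_cases hbot : mpPow H k i j = ⊥
  · exact ⟨0, by have := i.pos; omega, hbot ▸ bot_le⟩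
  obtain ⟨p, rfl, rfl, hpw⟩ := exists_walk_of_mpPow_ne_bot H hbot
  obtain ⟨x, y, hxy, hpxy⟩ :=
    Fintype.exists_ne_map_eq_of_card_lt (fun t : Fin (n + 1) => p t) (by simp)
  wlog hlt : (x : ℕ) < y generalizing x y
  · exact this y x hxy.symm hpxy.symm (by omega)
  have hyk : (y : ℕ) ≤ k := by omega
  refine ⟨x + (k - y), by omega, ?_⟩
  calc mpPow H k (p 0) (p k)
      = walkWeight H p 0 x + walkWeight H p x y + walkWeight H p y k := by
        rw [hpw, walkWeight_add H p (Nat.zero_le _) hlt.le, walkWeight_add H p (by omega) hyk]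
    _ ≤ walkWeight H p 0 x + walkWeight H p y k :=
        add_le_add_left (add_le_of_nonpos_right
          (walkWeight_nonpos_of_cycle hTr p hlt (by omega) hpxy)) _
    _ ≤ mpPow H x (p 0) (p x) + mpPow H (k - y) (p x) (p k) := by
        refine add_le_add ?_ ?_
        · simpa using walkWeight_le_mpPow H p (Nat.zero_le x)
        · simpa [hpxy] using walkWeight_le_mpPow H p hyk
    _ ≤ mpPow H (x + (k - y)) (p 0) (p k) := mpPow_add_le H _ _ _ _ _

lemma mpPow_le_mpStar (hTr : mpTrFun H ≤ 0) (k : ℕ) (i j : Fin n) :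
    mpPow H k i j ≤ mpStar H i j := by
  induction k using Nat.strong_induction_on with
  | _ k ih =>
    rcases lt_or_ge k n with hk | hk
    · exact le_sup (f := fun k => mpPow H k i j) (mem_range.2 hk)
    · obtain ⟨k', hk', hle⟩ := exists_lt_mpPow_le hTr hk i j
      exact hle.trans (ih k' hk')

lemma mpMul_mpStar_le (hTr : mpTrFun H ≤ 0) (i j : Fin n) :
    mpMul H (mpStar H) i j ≤ mpStar H i j := by
  refine Finset.sup_le fun l _ => ?_
  change H i l + (range n).sup (fun k => mpPow H k l j) ≤ _
  rw [mp_add_sup]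
  exact Finset.sup_le fun k _ =>
    (add_mpPow_le_mpPow_succ H k i l j).trans (mpPow_le_mpStar hTr _ i j)

lemma mpPow_diag_le_succ (hdiag : ∀ j j', H j j' ≠ ⊥ → 0 ≤ H j j) {k : ℕ} (hk : 1 ≤ k)
    (v : Fin n) :
    mpPow H k v v ≤ mpPow H (k + 1) v v := by
  by_cases hbot : mpPow H k v v = ⊥
  · exact hbot ▸ bot_le
  obtain ⟨s, rfl⟩ : ∃ s, k = s + 1 := ⟨k - 1, by omega⟩
  obtain ⟨w, -, hw⟩ : ∃ w ∈ univ, H v w + mpPow H s w v ≠ ⊥ := by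
    by_contra! hall
    exact hbot ((Finset.sup_eq_bot_iff _ _).2 hall)
  have hvv : 0 ≤ H v v := hdiag v w fun hb => hw (by rw [hb, WithBot.bot_add])
  calc mpPow H (s + 1) v v ≤ H v v + mpPow H (s + 1) v v := le_add_of_nonneg_left hvv
    _ ≤ mpPow H (s + 1 + 1) v v := add_mpPow_le_mpPow_succ H _ _ _ _

lemma mpTrFun_le_mpTr_mpPow (hdiag : ∀ j j', H j j' ≠ ⊥ → 0 ≤ H j j) :
    mpTrFun H ≤ mpTr (mpPow H n) := by
  refine Finset.sup_le fun k hk => Finset.sup_le fun v _ => ?_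
  obtain ⟨hk1, hkn⟩ := mem_Icc.1 hk
  have hmono : MonotoneOn (fun k => mpPow H k v v) {k | 1 ≤ k} :=
    monotoneOn_nat_Ici_of_le_succ fun k hk => mpPow_diag_le_succ hdiag hk v
  exact (hmono hk1 (hk1.trans hkn) hkn).trans (le_sup (f := fun v => mpPow H n v v) (mem_univ v))

end Star

theorem stmt13_general {m n : ℕ} (A B G : Matrix (Fin m) (Fin n) MP)
    (hG : RowMonomial G)
    (hGB : ∀ i j, G i j ≠ ⊥ → G i j = B i j)
    (H : Matrix (Fin n) (Fin n) MP) (hH : H = mpMul (mpConj G) (mpAdd A B))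
    (htr : mpTr (mpPow H n) ≤ 0) :
    (∀ i j, mpMul A (mpStar H) i j ≤ mpMul B (mpStar H) i j) ∧
      ∀ u : Fin n → MP, Regular u →
        ∀ i, mpMulVec A (mpMulVec (mpStar H) u) i ≤ mpMulVec B (mpMulVec (mpStar H) u) i := by
  have hdiag : ∀ j j', H j j' ≠ ⊥ → 0 ≤ H j j := hH ▸ fun j j' =>
    mpConj_mul_diag_nonneg fun i j h => (hGB i j h).trans_le le_sup_right
  have hstar : ∀ i j, mpMul H (mpStar H) i j ≤ mpStar H i j :=
    mpMul_mpStar_le ((mpTrFun_le_mpTr_mpPow hdiag).trans htr)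
  have hBG : ∀ i, 0 ≤ mpMul B (mpConj G) i i :=
    mpMul_mpConj_diag_nonneg hG.rowRegular fun i j h => (hGB i j h).le
  have main : ∀ i l, mpMul A (mpStar H) i l ≤ mpMul B (mpStar H) i l := fun i l =>
    calc mpMul A (mpStar H) i l
        ≤ mpMul (mpAdd A B) (mpStar H) i l := mpMul_mono_left (fun _ _ => le_sup_left) _ i l
      _ ≤ mpMul (mpMul B (mpConj G)) (mpMul (mpAdd A B) (mpStar H)) i l :=
          le_mpMul_of_diag_nonneg hBG _ i l
      _ = mpMul B (mpMul H (mpStar H)) i l := by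
          rw [mpMul_assoc, ← mpMul_assoc (mpConj G), hH]
      _ ≤ mpMul B (mpStar H) i l := mpMul_mono_right B hstar i l
  refine ⟨main, fun u _ i => ?_⟩
  rw [← mpMulVec_mpMul, ← mpMulVec_mpMul]
  exact mpMulVec_mono_left main u i

theorem stmt13 {m n : ℕ} (A B G : Matrix (Fin m) (Fin n) MP)
    (hG : RowMonomial G)
    (hGle : ∀ i j, G i j ≤ B i j) (hGB : ∀ i j, G i j ≠ ⊥ → G i j = B i j)
    (H : Matrix (Fin n) (Fin n) MP) (hH : H = mpMul (mpConj G) (mpAdd A B))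
    (htr : mpTr (mpPow H n) ≤ 0) :
    (∀ i j, mpMul A (mpStar H) i j ≤ mpMul B (mpStar H) i j) ∧
      ∀ u : Fin n → MP, Regular u →
        ∀ i, mpMulVec A (mpMulVec (mpStar H) u) i ≤ mpMulVec B (mpMulVec (mpStar H) u) i :=
  stmt13_general A B G hG hGB H hH htr
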